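/- arXiv:1504.05932 — 2 statements merged into one kernel-verified Lean document; each statement's English description precedes it below -/
import Mathlib

section
/- The serial dictatorship allocation mechanism with respect to any fixed order over the agents, on a basic categorized domain, is strategy-proof, non-bossy, and category-wise neutral. -/
/-- A bundle in a basic categorized domain: one item (from `Fin n`) per category (`Fin p`). -/
abbrev Bundle (n p : ℕ) := Fin p → Fin n

/-- A preference: a binary relation on bundles (`R a b` means `a` is strictly preferred to `b`). -/
abbrev Pref (n p : ℕ) := Bundle n p → Bundle n p → Prop

/-- A profile assigns a preference to each of the `n` agents. -/
abbrev Profile (n p : ℕ) := Fin n → Pref n p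

/-- An allocation mechanism: maps a profile to the bundle of each agent. -/
abbrev Mechanism (n p : ℕ) := Profile n p → Fin n → Bundle n p

/-- All preferences in the profile are strict linear orders. -/
def ValidProfile {n p : ℕ} (P : Profile n p) : Prop :=
  ∀ j, IsStrictTotalOrder (Bundle n p) (P j)

/-- A valid allocation: in every category, no item is given to two agents. -/
def ValidAlloc {n p : ℕ} (A : Fin n → Bundle n p) : Prop :=
  ∀ i : Fin p, Function.Injective fun j => A j i

/-- Strategy-proofness: no agent can get a strictly better bundle by misreporting. -/
def StrategyProof {n p : ℕ} (f : Mechanism n p) : Prop :=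
  ∀ P : Profile n p, ValidProfile P → ∀ j : Fin n, ∀ R' : Pref n p,
    IsStrictTotalOrder (Bundle n p) R' →
    f P j = f (Function.update P j R') j ∨ P j (f P j) (f (Function.update P j R') j)

/-- Non-bossiness: an agent cannot change others' bundles without changing her own. -/
def NonBossy {n p : ℕ} (f : Mechanism n p) : Prop :=
  ∀ P : Profile n p, ValidProfile P → ∀ j : Fin n, ∀ R' : Pref n p,
    IsStrictTotalOrder (Bundle n p) R' →
    f P j = f (Function.update P j R') j → f P = f (Function.update P j R')

/-- Relabel a bundle by permuting the items of category `i` by `M`. -/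
def relabel {n p : ℕ} (i : Fin p) (M : Fin n ≃ Fin n) (d : Bundle n p) : Bundle n p :=
  Function.update d i (M (d i))

/-- The preference induced on relabeled bundles. -/
def permPref {n p : ℕ} (i : Fin p) (M : Fin n ≃ Fin n) (R : Pref n p) : Pref n p :=
  fun a b => R (relabel i M.symm a) (relabel i M.symm b)

/-- Category-wise neutrality: permuting the items of one category permutes the allocation. -/
def CatNeutral {n p : ℕ} (f : Mechanism n p) : Prop :=
  ∀ P : Profile n p, ValidProfile P → ∀ (i : Fin p) (M : Fin n ≃ Fin n) (j : Fin n),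
    f (fun j' => permPref i M (P j')) j = relabel i M (f P j)

/-- Pareto optimality of a mechanism. -/
def ParetoOptimal {n p : ℕ} (f : Mechanism n p) : Prop :=
  ∀ P : Profile n p, ValidProfile P →
    ¬ ∃ A : Fin n → Bundle n p, ValidAlloc A ∧
      (∀ j, A j = f P j ∨ P j (A j) (f P j)) ∧ (∃ j, P j (A j) (f P j))

/-- `R'` is a pushup of `d` from `R`: relative order of other bundles unchanged,
and the set of bundles above `d` only shrinks. -/
def Pushup {n p : ℕ} (d : Bundle n p) (R R' : Pref n p) : Prop :=
  (∀ a b, a ≠ d → b ≠ d → (R' a b ↔ R a b)) ∧ (∀ a, R' a d → R a d)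

/-- `A` is the serial-dictatorship allocation for profile `P` and agent order `K`
(`K t` is the agent acting at step `t`): each dictator's bundle avoids earlier dictators'
items and is preferred to every other bundle avoiding earlier dictators' items. -/
def IsSDAlloc {n p : ℕ} (P : Profile n p) (K : Fin n ≃ Fin n) (A : Fin n → Bundle n p) : Prop :=
  ∀ t : Fin n,
    (∀ s : Fin n, s < t → ∀ i, A (K s) i ≠ A (K t) i) ∧
    (∀ b : Bundle n p, (∀ s : Fin n, s < t → ∀ i, A (K s) i ≠ b i) →
      b ≠ A (K t) → P (K t) (A (K t)) b)

/-- `f` is a serial dictatorship. -/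
def SerialDict {n p : ℕ} (f : Mechanism n p) : Prop :=
  ∃ K : Fin n ≃ Fin n, ∀ P : Profile n p, ValidProfile P → IsSDAlloc P K (f P)

/-!
A serial-dictatorship allocation is pinned down dictator by dictator: if two such allocations
agree before step `t`, each one's bundle for the `t`-th dictator is available to her in the
other, so when her preference is the same in both, asymmetry forces the same choice. Hence a
report of agent `j` cannot affect the dictators before her, and her own bundle is her best
among what they leave (strategy-proofness); if her bundle does not change, nothing after her
changes either (non-bossiness). Relabeling the items of one category maps serial-dictatorship
allocations to serial-dictatorship allocations of the relabeled profile, and these are unique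
(neutrality).
-/

section

variable {n p : ℕ}

@[simp]
lemma relabel_symm_relabel (i : Fin p) (M : Fin n ≃ Fin n) (d : Bundle n p) :
    relabel i M.symm (relabel i M d) = d := by
  simp [relabel]

lemma relabel_injective (i : Fin p) (M : Fin n ≃ Fin n) :
    Function.Injective (relabel (n := n) i M) :=
  Function.LeftInverse.injective (relabel_symm_relabel i M)

lemma relabel_apply_eq_iff (i : Fin p) (M : Fin n ≃ Fin n) (a b : Bundle n p) (k : Fin p) :
    relabel i M a k = b k ↔ a k = relabel i M.symm b k := by
  by_cases hk : k = i
  · subst hk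
    simp [relabel, ← Equiv.eq_symm_apply]
  · simp [relabel, Function.update_of_ne hk]

lemma isStrictTotalOrder_permPref (i : Fin p) (M : Fin n ≃ Fin n) {R : Pref n p}
    [IsStrictTotalOrder (Bundle n p) R] : IsStrictTotalOrder (Bundle n p) (permPref i M R) :=
  (relabel_injective i M.symm).isStrictTotalOrder_onFun R

lemma ValidProfile.update {P : Profile n p} (hP : ValidProfile P) (j : Fin n)
    {R : Pref n p} (hR : IsStrictTotalOrder (Bundle n p) R) :
    ValidProfile (Function.update P j R) := by
  intro j'
  rcases eq_or_ne j' j with rfl | hj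
  · simpa using hR
  · simpa [Function.update_of_ne hj] using hP j'

lemma ValidProfile.permPref {P : Profile n p} (hP : ValidProfile P) (i : Fin p)
    (M : Fin n ≃ Fin n) : ValidProfile fun j => permPref i M (P j) :=
  fun j => haveI := hP j; isStrictTotalOrder_permPref i M

namespace IsSDAlloc

variable {K : Fin n ≃ Fin n} {P P' : Profile n p} {A A' : Fin n → Bundle n p}

lemma eq_or_prefers (hA : IsSDAlloc P K A) (hA' : IsSDAlloc P' K A') (t : Fin n)
    (hprev : ∀ u < t, A (K u) = A' (K u)) :
    A (K t) = A' (K t) ∨ P (K t) (A (K t)) (A' (K t)) := by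
  refine or_iff_not_imp_left.2 fun hne => (hA t).2 _ (fun u hu => ?_) (Ne.symm hne)
  rw [hprev u hu]
  exact (hA' t).1 u hu

lemma apply_eq_of_agree (hP : ValidProfile P) (hA : IsSDAlloc P K A) (hA' : IsSDAlloc P' K A')
    (s : Fin n) (hagree : ∀ u ≤ s, P (K u) = P' (K u) ∨ A (K u) = A' (K u)) :
    A (K s) = A' (K s) := by
  induction s using WellFoundedLT.induction with
  | _ s ih =>
    have hprev : ∀ u < s, A (K u) = A' (K u) := fun u hu =>
      ih u hu fun v hv => hagree v (hv.trans hu.le)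
    rcases hagree s le_rfl with hpref | heq
    · have := hP (K s)
      rcases hA.eq_or_prefers hA' s hprev with heq | hlt
      · exact heq
      rcases hA'.eq_or_prefers hA s (fun u hu => (hprev u hu).symm) with heq | hgt
      · exact heq.symm
      · rw [← hpref] at hgt
        exact absurd hgt (asymm hlt)
    · exact heq

lemma eq (hP : ValidProfile P) (hA : IsSDAlloc P K A) (hA' : IsSDAlloc P K A') : A = A' := by
  funext j
  simpa using hA.apply_eq_of_agree hP hA' (K.symm j) fun _ _ => Or.inl rfl

lemma apply_eq_of_lt_update (hP : ValidProfile P) {j : Fin n} {R : Pref n p}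
    (hA : IsSDAlloc P K A) (hA' : IsSDAlloc (Function.update P j R) K A')
    {u : Fin n} (hu : u < K.symm j) : A (K u) = A' (K u) :=
  hA.apply_eq_of_agree hP hA' u fun v hv => Or.inl <| by
    rw [Function.update_of_ne]
    rintro rfl
    rw [Equiv.symm_apply_apply] at hu
    exact (hv.trans_lt hu).false

lemma map_relabel (hA : IsSDAlloc P K A) (i : Fin p) (M : Fin n ≃ Fin n) :
    IsSDAlloc (fun j => permPref i M (P j)) K (fun j => relabel i M (A j)) := by
  intro t
  refine ⟨fun s hs k => ?_, fun b hb hne => ?_⟩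
  · rw [Ne, relabel_apply_eq_iff, relabel_symm_relabel]
    exact (hA t).1 s hs k
  · have hb' : ∀ s < t, ∀ k, A (K s) k ≠ relabel i M.symm b k := fun s hs k =>
      (relabel_apply_eq_iff i M _ b k).not.1 (hb s hs k)
    have hne' : relabel i M.symm b ≠ A (K t) := by
      intro h
      apply hne
      simpa [← h] using (relabel_symm_relabel i M.symm b).symm
    simpa [permPref] using (hA t).2 _ hb' hne'

end IsSDAlloc

variable {f : Mechanism n p} {K : Fin n ≃ Fin n}

theorem strategyProof_of_isSDAlloc (hSD : ∀ P, ValidProfile P → IsSDAlloc P K (f P)) :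
    StrategyProof f := by
  intro P hP j R hR
  have hP' := hP.update j hR
  simpa using (hSD P hP).eq_or_prefers (hSD _ hP') (K.symm j)
    fun u hu => (hSD P hP).apply_eq_of_lt_update hP (hSD _ hP') hu

theorem nonBossy_of_isSDAlloc (hSD : ∀ P, ValidProfile P → IsSDAlloc P K (f P)) :
    NonBossy f := by
  intro P hP j R hR hj
  have hP' := hP.update j hR
  funext j'
  simpa using (hSD P hP).apply_eq_of_agree hP (hSD _ hP') (K.symm j') fun u _ => by
    rcases eq_or_ne (K u) j with hu | hu
    · exact Or.inr (hu ▸ hj)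
    · exact Or.inl (Function.update_of_ne hu R P).symm

theorem catNeutral_of_isSDAlloc (hSD : ∀ P, ValidProfile P → IsSDAlloc P K (f P)) :
    CatNeutral f := by
  intro P hP i M j
  have hQ := hP.permPref i M
  exact congrFun ((hSD _ hQ).eq hQ ((hSD P hP).map_relabel i M)) j

end

theorem statement6_general (n p : ℕ) (f : Mechanism n p) (K : Fin n ≃ Fin n)
    (hSD : ∀ P : Profile n p, ValidProfile P → IsSDAlloc P K (f P)) :
    StrategyProof f ∧ NonBossy f ∧ CatNeutral f :=
  ⟨strategyProof_of_isSDAlloc hSD, nonBossy_of_isSDAlloc hSD, catNeutral_of_isSDAlloc hSD⟩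

theorem statement6 (n p : ℕ) (f : Mechanism n p) (K : Fin n ≃ Fin n)
    (hfA : ∀ P : Profile n p, ValidProfile P → ValidAlloc (f P))
    (hSD : ∀ P : Profile n p, ValidProfile P → IsSDAlloc P K (f P)) :
    StrategyProof f ∧ NonBossy f ∧ CatNeutral f :=
  statement6_general n p f K hSD
end

section
/- For any CSAM with all agents optimistic, the worst-case egalitarian rank is n^p; equivalently, for every order O over agent–category pairs there exists an agent j such that k_{j,O_j(l)} = 1 for all l ≥ K_j. -/
open scoped Classical

/-- A categorial sequential allocation mechanism: a linear order over agent–category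
pairs, i.e. a bijection from rounds `Fin (n*p)` to pairs. -/
abbrev Csam (n p : ℕ) := Fin (n * p) ≃ Fin n × Fin p

/-- The rank of bundle `b` in preference `R` (1 = best, `n^p` = worst). -/
noncomputable def rank {n p : ℕ} (R : Pref n p) (b : Bundle n p) : ℕ :=
  1 + (Finset.univ.filter fun c => R c b).card

/-- `kval O j i`: the number of category-`i` items still available when agent `j`
picks from category `i` (depends only on `O`). -/
def kval {n p : ℕ} (O : Csam n p) (j : Fin n) (i : Fin p) : ℕ :=
  1 + (Finset.univ.filter fun j' : Fin n => O.symm (j, i) < O.symm (j', i)).card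

/-- `Oj O j l`: the `l`-th category (0-based) that agent `j` visits in `O`. -/
noncomputable def Oj {n p : ℕ} (O : Csam n p) (j : Fin n) (l : Fin p) : Fin p :=
  (O ((Finset.univ.image fun i : Fin p => O.symm (j, i)).orderIsoOfFin
      (by
        rw [Finset.card_image_of_injective _
          (fun a b h => congrArg Prod.snd (O.symm.injective h))]
        simp) l).1).2

/-- `NoInterruptF O j K`: for every later position `l > K` of agent `j`, no other agent
picks from category `Oj O j l` between agent `j`'s pick in category `Oj O j K`
and her pick in category `Oj O j l`. -/
def NoInterruptF {n p : ℕ} (O : Csam n p) (j : Fin n) (K : ℕ) : Prop :=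
  ∀ lK : Fin p, (lK : ℕ) = K → ∀ l : Fin p, lK < l → ∀ j' : Fin n, j' ≠ j →
    ¬ (O.symm (j, Oj O j lK) < O.symm (j', Oj O j l) ∧
       O.symm (j', Oj O j l) < O.symm (j, Oj O j l))

/-- `Kval O j`: the smallest (0-based) index `K` such that agent `j` is not interrupted
from position `K` onwards. -/
noncomputable def Kval {n p : ℕ} (O : Csam n p) (j : Fin n) : ℕ :=
  sInf {K : ℕ | K < p ∧ NoInterruptF O j K}

/-- Item `d` of category `i` is still available at round `t` under final allocation `A`. -/
def availAt {n p : ℕ} (O : Csam n p) (A : Fin n → Bundle n p) (t : Fin (n * p))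
    (i : Fin p) (d : Fin n) : Prop :=
  ∀ j' : Fin n, O.symm (j', i) < t → A j' i ≠ d

/-- Bundle `b` is still achievable by agent `j` at round `t`: it agrees with her previous
choices and all remaining components are still available. -/
def achievable {n p : ℕ} (O : Csam n p) (A : Fin n → Bundle n p) (j : Fin n)
    (t : Fin (n * p)) (b : Bundle n p) : Prop :=
  (∀ c : Fin p, O.symm (j, c) < t → b c = A j c) ∧
  (∀ c : Fin p, ¬ O.symm (j, c) < t → availAt O A t c (b c))

/-- Agent `j` plays optimistically in the run producing allocation `A`: at each of her
rounds she picks the item of her top-ranked still-achievable bundle. -/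
def OptPlays {n p : ℕ} (O : Csam n p) (P : Profile n p) (A : Fin n → Bundle n p)
    (j : Fin n) : Prop :=
  ∀ i : Fin p, ∃ b : Bundle n p, achievable O A j (O.symm (j, i)) b ∧
    (∀ b' : Bundle n p, achievable O A j (O.symm (j, i)) b' → b' ≠ b → P j b b') ∧
    A j i = b i

/-- Agent `j` plays pessimistically in the run producing `A`: at each of her rounds, for
every available alternative item `d'`, some achievable bundle with component `d'` is worse
than every achievable bundle with the component she actually chose. -/
def PesPlays {n p : ℕ} (O : Csam n p) (P : Profile n p) (A : Fin n → Bundle n p)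
    (j : Fin n) : Prop :=
  ∀ i : Fin p, ∀ d' : Fin n, availAt O A (O.symm (j, i)) i d' → d' ≠ A j i →
    ∃ w' : Bundle n p, achievable O A j (O.symm (j, i)) w' ∧ w' i = d' ∧
      ∀ w : Bundle n p, achievable O A j (O.symm (j, i)) w → w i = A j i → P j w w'

/-- `∏_{l = K_j}^{p} k_{j, O_j(l)}`. -/
noncomputable def optProd {n p : ℕ} (O : Csam n p) (j : Fin n) : ℕ :=
  ∏ l ∈ Finset.univ.filter (fun l : Fin p => Kval O j ≤ (l : ℕ)), kval O j (Oj O j l)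

/-- `∑_{l = 1}^{p} (k_{j, O_j(l)} - 1)`. -/
noncomputable def pesSum {n p : ℕ} (O : Csam n p) (j : Fin n) : ℕ :=
  ∑ l : Fin p, (kval O j (Oj O j l) - 1)

/-!
Let `j` be the agent whose uninterrupted final stretch of picks starts last. Any agent picking
after `j` from a category of that stretch would interrupt her own final stretch, which began
earlier; so `j` picks last in each of these categories.

For the worst case give every agent `j` item `j` of each category. The others rank this bundle
first; the agent `g` above ranks it last and ranks first a bundle `top` chosen at her last round
with an alternative left. There she either picks last in the category, so every achievable bundle
agrees with her pick, or her stretch is interrupted later, in a category `c` by an agent `j'`,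
and she can aim at the item `j'` will take in `c`. Up to that round `top` stays achievable and
agrees with her picks, afterwards her own bundle is her only option, so playing optimistically
she ends up with her worst bundle.
-/

open Finset

section Positions

variable {n p : ℕ} (O : Csam n p) (j : Fin n)

lemma card_image_symm_pair : (univ.image fun i : Fin p => O.symm (j, i)).card = p := by
  rw [card_image_of_injective _ fun a b h => congrArg Prod.snd (O.symm.injective h)]
  simp

lemma symm_Oj (l : Fin p) :
    O.symm (j, Oj O j l) =
      ((univ.image fun i : Fin p => O.symm (j, i)).orderIsoOfFin (card_image_symm_pair O j) l :
        Fin (n * p)) := by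
  set x : Fin (n * p) :=
    ↑((univ.image fun i : Fin p => O.symm (j, i)).orderIsoOfFin (card_image_symm_pair O j) l)
  have hx : x ∈ univ.image fun i : Fin p => O.symm (j, i) := Subtype.prop _
  obtain ⟨i, -, hi⟩ := mem_image.1 hx
  have hfst : (O x).1 = j := by rw [← hi, Equiv.apply_symm_apply]
  change O.symm (j, (O x).2) = x
  rw [← hfst, Equiv.symm_apply_apply]

lemma symm_Oj_strictMono : StrictMono fun l : Fin p => O.symm (j, Oj O j l) := fun a b hab => by
  simp only [symm_Oj]
  exact ((univ.image _).orderIsoOfFin (card_image_symm_pair O j)).strictMono hab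

lemma exists_Oj_eq (i : Fin p) : ∃ l, Oj O j l = i := by
  obtain ⟨l, hl⟩ := ((univ.image fun i : Fin p => O.symm (j, i)).orderIsoOfFin
    (card_image_symm_pair O j)).surjective ⟨_, mem_image_of_mem _ (mem_univ i)⟩
  have h : O.symm (j, Oj O j l) = O.symm (j, i) := by rw [symm_Oj, hl]
  exact ⟨l, congrArg Prod.snd (O.symm.injective h)⟩

lemma kval_eq_one_iff (i : Fin p) :
    kval O j i = 1 ↔ ∀ j' : Fin n, ¬ O.symm (j, i) < O.symm (j', i) := by
  simp [kval, filter_eq_empty_iff]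

end Positions

section Interruptions

variable {n p : ℕ} (O : Csam n p) (j : Fin n)

def Interrupted (i : Fin p) : Prop :=
  ∃ c j', j' ≠ j ∧ O.symm (j, i) < O.symm (j', c) ∧ O.symm (j', c) < O.symm (j, c)

lemma noInterruptF_iff (l : Fin p) : NoInterruptF O j l ↔ ¬ Interrupted O j (Oj O j l) := by
  constructor
  · rintro h ⟨c, j', hj', hbefore, hafter⟩
    obtain ⟨l', rfl⟩ := exists_Oj_eq O j c
    exact h l rfl l' ((symm_Oj_strictMono O j).lt_iff_lt.1 (hbefore.trans hafter)) j' hj'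
      ⟨hbefore, hafter⟩
  · rintro h lK hlK l' - j' hj' ⟨hbefore, hafter⟩
    obtain rfl : lK = l := Fin.ext hlK
    exact h ⟨_, j', hj', hbefore, hafter⟩

lemma Kval_set_nonempty (hp : 0 < p) : {K : ℕ | K < p ∧ NoInterruptF O j K}.Nonempty := by
  refine ⟨p - 1, by omega, fun lK hlK l hl => ?_⟩
  have := l.2
  have : (lK : ℕ) < l := hl
  omega

lemma Kval_lt (hp : 0 < p) : Kval O j < p :=
  (Nat.sInf_mem (Kval_set_nonempty O j hp)).1

lemma not_interrupted_Kval (hp : 0 < p) :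
    ¬ Interrupted O j (Oj O j ⟨Kval O j, Kval_lt O j hp⟩) :=
  (noInterruptF_iff O j _).1 (Nat.sInf_mem (Kval_set_nonempty O j hp)).2

lemma interrupted_of_lt_Kval (l : Fin p) (hl : (l : ℕ) < Kval O j) :
    Interrupted O j (Oj O j l) := by
  by_contra h
  exact Nat.notMem_of_lt_sInf hl ⟨l.2, (noInterruptF_iff O j l).2 h⟩

lemma kval_eq_one_or_interrupted
    (hj : ∀ l : Fin p, Kval O j ≤ (l : ℕ) → kval O j (Oj O j l) = 1) (i : Fin p) :
    kval O j i = 1 ∨ Interrupted O j i := by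
  obtain ⟨l, rfl⟩ := exists_Oj_eq O j i
  exact (le_or_gt (Kval O j) l).imp (hj l) (interrupted_of_lt_Kval O j l)

end Interruptions

theorem exists_forall_kval_eq_one {n p : ℕ} (hn : 0 < n) (hp : 0 < p) (O : Csam n p) :
    ∃ j : Fin n, ∀ l : Fin p, Kval O j ≤ (l : ℕ) → kval O j (Oj O j l) = 1 := by
  let start : Fin n → Fin (n * p) := fun j => O.symm (j, Oj O j ⟨Kval O j, Kval_lt O j hp⟩)
  obtain ⟨j, -, hj⟩ := exists_max_image univ start ⟨⟨0, hn⟩, mem_univ _⟩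
  refine ⟨j, fun l hl => (kval_eq_one_iff O j _).2 fun j' hlater => ?_⟩
  have hj' : j' ≠ j := by rintro rfl; exact lt_irrefl _ hlater
  have hstart : start j ≤ O.symm (j, Oj O j l) := (symm_Oj_strictMono O j).monotone hl
  have hearlier : start j' < start j := (hj j' (mem_univ _)).lt_of_ne fun h =>
    hj' (congrArg Prod.fst (O.symm.injective h))
  exact not_interrupted_Kval O j' hp ⟨_, j, hj'.symm, hearlier.trans_le hstart, hlater⟩

section Achievable

variable {n p : ℕ} {O : Csam n p} {A : Fin n → Bundle n p} {j : Fin n}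

lemma availAt.mono {t t' : Fin (n * p)} {i : Fin p} {d : Fin n} (h : availAt O A t i d)
    (htt : t' ≤ t) : availAt O A t' i d :=
  fun j' hj' => h j' (hj'.trans_le htt)

lemma availAt_own (hA : ValidAlloc A) {t : Fin (n * p)} {i : Fin p}
    (hi : ¬ O.symm (j, i) < t) : availAt O A t i (A j i) :=
  fun _ hj' hj'i => hi (hA i hj'i ▸ hj')

lemma achievable_self (hA : ValidAlloc A) (t : Fin (n * p)) : achievable O A j t (A j) :=
  ⟨fun _ _ => rfl, fun _ hc => availAt_own hA hc⟩

lemma achievable.mono (hA : ValidAlloc A) {t t' : Fin (n * p)} {b : Bundle n p}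
    (hb : achievable O A j t b) (htt : t' ≤ t) : achievable O A j t' b := by
  refine ⟨fun c hc => hb.1 c (hc.trans_le htt), fun c hc => ?_⟩
  by_cases hct : O.symm (j, c) < t
  · rw [hb.1 c hct]
    exact availAt_own hA hc
  · exact (hb.2 c hct).mono htt

lemma achievable_apply_eq_of_kval_eq_one (hA : ValidAlloc A) {i : Fin p} (hk : kval O j i = 1)
    {b : Bundle n p} (hb : achievable O A j (O.symm (j, i)) b) : b i = A j i := by
  obtain ⟨j', hj'⟩ := Finite.surjective_of_injective (hA i) (b i)
  have hnot_before : ¬ O.symm (j', i) < O.symm (j, i) := fun h =>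
    hb.2 i (lt_irrefl _) j' h hj'
  have hnot_after := (kval_eq_one_iff O j i).1 hk j'
  obtain rfl : j' = j := congrArg Prod.fst (O.symm.injective
    (le_antisymm (not_lt.1 hnot_after) (not_lt.1 hnot_before)))
  exact hj'.symm

lemma exists_achievable_ne_of_interrupted (hA : ValidAlloc A) {i : Fin p}
    (hi : Interrupted O j i) :
    ∃ b, achievable O A j (O.symm (j, i)) b ∧ b ≠ A j ∧ b i = A j i := by
  obtain ⟨c, j', hj', hbefore, hafter⟩ := hi
  have hic : i ≠ c := by rintro rfl; exact lt_asymm hbefore hafter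
  refine ⟨Function.update (A j) c (A j' c), ⟨fun c' hc' => ?_, fun c' hc' => ?_⟩, fun h => ?_,
    Function.update_of_ne hic _ _⟩
  · have : c' ≠ c := by rintro rfl; exact lt_asymm hc' (hbefore.trans hafter)
    exact Function.update_of_ne this _ _
  · rcases eq_or_ne c' c with rfl | hc'c
    · rw [Function.update_self]
      exact fun j'' hj'' hj''c => lt_asymm hbefore (hA c' hj''c ▸ hj'')
    · rw [Function.update_of_ne hc'c]
      exact availAt_own hA hc'
  · exact hj' (hA c (by simpa using congrFun h c))

end Achievable

lemma exists_top_bundle {n p : ℕ} {O : Csam n p} {A : Fin n → Bundle n p} (hA : ValidAlloc A)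
    {g : Fin n} (hg : ∀ i, kval O g i = 1 ∨ Interrupted O g i) :
    ∃ top : Bundle n p, ∀ i : Fin p,
      (top ≠ A g ∧ achievable O A g (O.symm (g, i)) top ∧ top i = A g i) ∨
        ∀ b, achievable O A g (O.symm (g, i)) b → b = A g := by
  by_cases hfree : ∃ i b, achievable O A g (O.symm (g, i)) b ∧ b ≠ A g
  swap
  · push Not at hfree
    exact ⟨A g, fun i => Or.inr (hfree i)⟩
  obtain ⟨i₀, hi₀⟩ := hfree
  obtain ⟨iL, hiL, hlast⟩ := exists_max_image
    (univ.filter fun i => ∃ b, achievable O A g (O.symm (g, i)) b ∧ b ≠ A g)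
    (fun i => O.symm (g, i)) ⟨i₀, mem_filter.2 ⟨mem_univ _, hi₀⟩⟩
  obtain ⟨top, htop, hne, hiL_eq⟩ : ∃ top, achievable O A g (O.symm (g, iL)) top ∧
      top ≠ A g ∧ top iL = A g iL := by
    rcases hg iL with hk | hint
    · obtain ⟨b, hb, hbne⟩ := (mem_filter.1 hiL).2
      exact ⟨b, hb, hbne, achievable_apply_eq_of_kval_eq_one hA hk hb⟩
    · exact exists_achievable_ne_of_interrupted hA hint
  refine ⟨top, fun i => ?_⟩
  rcases le_or_gt (O.symm (g, i)) (O.symm (g, iL)) with hle | hlt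
  · refine Or.inl ⟨hne, htop.mono hA hle, ?_⟩
    rcases hle.lt_or_eq with hlt | heq
    · exact htop.1 i hlt
    · obtain rfl : i = iL := congrArg Prod.snd (O.symm.injective heq)
      exact hiL_eq
  · refine Or.inr fun b hb => ?_
    by_contra hbne
    exact (hlast i (mem_filter.2 ⟨mem_univ _, b, hb, hbne⟩)).not_gt hlt

section KeyPreference

variable {n p : ℕ}

noncomputable def lexKey (key : Bundle n p → ℕ) (b : Bundle n p) :
    ℕ ×ₗ Fin (Fintype.card (Bundle n p)) :=
  toLex (key b, Fintype.equivFin (Bundle n p) b)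

noncomputable def prefOfKey (key : Bundle n p → ℕ) : Pref n p :=
  fun a b => lexKey key b < lexKey key a

lemma isStrictTotalOrder_prefOfKey (key : Bundle n p → ℕ) :
    IsStrictTotalOrder (Bundle n p) (prefOfKey key) :=
  Function.Injective.isStrictTotalOrder_onFun (r := (· > ·)) fun _ _ h =>
    (Fintype.equivFin _).injective (congrArg Prod.snd (toLex.injective h))

lemma prefOfKey_of_lt {key : Bundle n p → ℕ} {a b : Bundle n p} (h : key b < key a) :
    prefOfKey key a b :=
  Prod.Lex.lt_iff.2 (Or.inl h)

lemma rank_prefOfKey {key : Bundle n p → ℕ} {b : Bundle n p} (h : ∀ c, c ≠ b → key b < key c) :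
    rank (prefOfKey key) b = n ^ p := by
  have hfilter : univ.filter (fun c => prefOfKey key c b) = univ.erase b := by
    ext c
    simp only [mem_filter, mem_univ, true_and, mem_erase, and_true]
    refine ⟨fun hcb hc => ?_, fun hc => prefOfKey_of_lt (h c hc)⟩
    subst hc
    exact lt_irrefl (lexKey key c) hcb
  rw [rank, hfilter, card_erase_of_mem (mem_univ _), card_univ,
    add_tsub_cancel_of_le (Fintype.card_pos_iff.2 ⟨b⟩)]
  simp

end KeyPreference

noncomputable def worstOutcomeProfile {n p : ℕ} (A : Fin n → Bundle n p) (g : Fin n)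
    (top : Bundle n p) : Profile n p :=
  fun j => prefOfKey fun b =>
    if j = g then (if b = A g then 0 else if b = top then 2 else 1)
    else if b = A j then 1 else 0

theorem exists_profile_optPlays_rank_eq_pow {n p : ℕ} {O : Csam n p} {A : Fin n → Bundle n p}
    (hA : ValidAlloc A) {g : Fin n} (hg : ∀ i, kval O g i = 1 ∨ Interrupted O g i) :
    ∃ P : Profile n p, ValidProfile P ∧ (∀ j, OptPlays O P A j) ∧ rank (P g) (A g) = n ^ p := by
  obtain ⟨top, htop⟩ := exists_top_bundle hA hg
  refine ⟨worstOutcomeProfile A g top, fun j => isStrictTotalOrder_prefOfKey _, fun j i => ?_,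
    rank_prefOfKey fun c hc => ?_⟩
  · by_cases hj : j = g
    · subst hj
      rcases htop i with ⟨hne, hach, hi⟩ | hforced
      · refine ⟨top, hach, fun b _ hb => prefOfKey_of_lt ?_, hi.symm⟩
        simp only [if_neg hne]
        split_ifs <;> omega
      · exact ⟨A j, achievable_self hA _, fun b hb hne => absurd (hforced b hb) hne, rfl⟩
    · refine ⟨A j, achievable_self hA _, fun b _ hb => prefOfKey_of_lt ?_, rfl⟩
      simp [hj, hb]
  · simp only [if_neg hc]
    split_ifs <;> omega

theorem statement12 (n p : ℕ) (hn : 0 < n) (hp : 0 < p) (O : Csam n p) :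
    (∃ P : Profile n p, ValidProfile P ∧
      ∃ A : Fin n → Bundle n p, ValidAlloc A ∧ (∀ j, OptPlays O P A j) ∧
        ∃ j : Fin n, rank (P j) (A j) = n ^ p) ∧
    (∃ j : Fin n, ∀ l : Fin p, Kval O j ≤ (l : ℕ) → kval O j (Oj O j l) = 1) := by
  obtain ⟨g, hg⟩ := exists_forall_kval_eq_one hn hp O
  let A : Fin n → Bundle n p := fun j _ => j
  have hA : ValidAlloc A := fun _ _ _ h => h
  obtain ⟨P, hP, hopt, hrank⟩ :=
    exists_profile_optPlays_rank_eq_pow hA (kval_eq_one_or_interrupted O g hg)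
  exact ⟨⟨P, hP, A, hA, hopt, g, hrank⟩, g, hg⟩
end
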